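/- Let k ≥ 2 be an integer. For every real number c < k − 1 and every real number b there exists a finite-dimensional k-round F-algebra A such that l(A) > c·dim A + b. Hence k − 1 is the minimal u-velocity of the class of k-round algebras. -/

import Mathlib

namespace P

/-- The list of leaves (letters) of a nonassociative word, in order. -/
def leafList {α : Type*} : FreeMagma α → List α
  | .of a => [a]
  | .mul x y => leafList x ++ leafList y

/-- The length of a nonassociative word: the number of factors. -/
def wlen {α : Type*} (w : FreeMagma α) : ℕ := (leafList w).length

/-- Evaluation of a formal word with letters in a magma `A`. -/
def evalA {A : Type*} [Mul A] (w : FreeMagma A) : A :=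
  FreeMagma.lift (id : A → A) w

/-- Evaluation of a formal word in variables `Fin n` under an assignment `v`. -/
def evalVar {A : Type*} [Mul A] {n : ℕ} (v : Fin n → A) (w : FreeMagma (Fin n)) : A :=
  FreeMagma.lift v w

/-- `w` is a word in the set `S`: all its letters belong to `S`. -/
def HasLeavesIn {A : Type*} (S : Set A) (w : FreeMagma A) : Prop :=
  ∀ a ∈ leafList w, a ∈ S

/-- `L_i(S)`: the span of all values of words in `S` of length at most `i`.
For `i = 0` this is `0`, since every word has length at least 1. -/
def Lspan (F : Type*) {A : Type*} [Field F] [NonUnitalNonAssocRing A] [Module F A]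
    (S : Set A) (i : ℕ) : Submodule F A :=
  Submodule.span F { a | ∃ w : FreeMagma A, HasLeavesIn S w ∧ wlen w ≤ i ∧ evalA w = a }

/-- `S` is a generating set of the algebra `A`. -/
def Generates (F : Type*) {A : Type*} [Field F] [NonUnitalNonAssocRing A] [Module F A]
    (S : Set A) : Prop :=
  Submodule.span F { a | ∃ w : FreeMagma A, HasLeavesIn S w ∧ evalA w = a } = ⊤

/-- The length `l(S)` of a generating set: the least `k` with `L_k(S) = A`. -/
noncomputable def lenS (F : Type*) {A : Type*} [Field F] [NonUnitalNonAssocRing A] [Module F A]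
    (S : Set A) : ℕ :=
  sInf { k | Lspan F S k = ⊤ }

/-- The characteristic sequence of a generating set `S`, as a predicate on a
nondecreasing sequence `m : Fin d → ℕ`. -/
def IsCharSeq (F : Type*) {A : Type*} [Field F] [NonUnitalNonAssocRing A] [Module F A]
    (S : Set A) {d : ℕ} (m : Fin d → ℕ) : Prop :=
  Monotone m ∧ (∀ j, 1 ≤ m j) ∧
    ∀ t : ℕ, 1 ≤ t →
      (Finset.univ.filter fun j => m j = t).card =
        Module.finrank F (Lspan F S t) - Module.finrank F (Lspan F S (t - 1))

/-- `w` is a multilinear word using each variable of `T` exactly once. -/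
def IsMultilinearOn {n : ℕ} (T : Finset (Fin n)) (w : FreeMagma (Fin n)) : Prop :=
  (leafList w : Multiset (Fin n)) = T.val

/-- Membership in `D_0(z_0,…,z_k)`: multilinear words in `z_0,…,z_k` except those of
length `k+1` in which `z_0` is a factor of the last multiplication. -/
def InD0 {k : ℕ} (w : FreeMagma (Fin (k + 1))) : Prop :=
  (leafList w : Multiset (Fin (k + 1))).Nodup ∧
    ¬∃ u : FreeMagma (Fin (k + 1)),
        IsMultilinearOn (Finset.univ.erase 0) u ∧
          (w = FreeMagma.of 0 * u ∨ w = u * FreeMagma.of 0)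

/-- Membership in `D_l(z_0,…,z_k)`: multilinear words in `z_0,…,z_k` except those of
length `k+1` in which `z_0` occurs in the first factor of the last multiplication. -/
def InDl {k : ℕ} (w : FreeMagma (Fin (k + 1))) : Prop :=
  (leafList w : Multiset (Fin (k + 1))).Nodup ∧
    ¬((leafList w : Multiset (Fin (k + 1))) = (Finset.univ : Finset (Fin (k + 1))).val ∧
      ∃ w1 w2 : FreeMagma (Fin (k + 1)), w = w1 * w2 ∧ (0 : Fin (k + 1)) ∈ leafList w1)

/-- Membership in `D_r(z_0,…,z_k)`: multilinear words in `z_0,…,z_k` except those of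
length `k+1` in which `z_0` occurs in the second factor of the last multiplication. -/
def InDr {k : ℕ} (w : FreeMagma (Fin (k + 1))) : Prop :=
  (leafList w : Multiset (Fin (k + 1))).Nodup ∧
    ¬((leafList w : Multiset (Fin (k + 1))) = (Finset.univ : Finset (Fin (k + 1))).val ∧
      ∃ w1 w2 : FreeMagma (Fin (k + 1)), w = w1 * w2 ∧ (0 : Fin (k + 1)) ∈ leafList w2)

/-- The algebra `A` is `k`-mixing. -/
def IsKMixing (F A : Type*) [Field F] [NonUnitalNonAssocRing A] [Module F A] (k : ℕ) : Prop :=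
  ∀ (x : A) (y : Fin k → A) (w : FreeMagma (Fin (k + 1))),
    (∃ u, IsMultilinearOn (Finset.univ.erase 0) u ∧
        (w = FreeMagma.of 0 * u ∨ w = u * FreeMagma.of 0)) →
      evalVar (Fin.cons x y) w ∈
        Submodule.span F
          { a | ∃ z : FreeMagma (Fin (k + 1)), InD0 z ∧ evalVar (Fin.cons x y) z = a }

/-- The algebra `A` is `k`-sliding. -/
def IsKSliding (F A : Type*) [Field F] [NonUnitalNonAssocRing A] [Module F A] (k : ℕ) : Prop :=
  (∀ (x : A) (y : Fin k → A) (u : FreeMagma (Fin (k + 1))),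
      IsMultilinearOn (Finset.univ.erase 0) u →
        evalVar (Fin.cons x y) (u * FreeMagma.of 0) ∈
          Submodule.span F
            { a | ∃ z : FreeMagma (Fin (k + 1)), InDl z ∧ evalVar (Fin.cons x y) z = a }) ∨
  (∀ (x : A) (y : Fin k → A) (u : FreeMagma (Fin (k + 1))),
      IsMultilinearOn (Finset.univ.erase 0) u →
        evalVar (Fin.cons x y) (FreeMagma.of 0 * u) ∈
          Submodule.span F
            { a | ∃ z : FreeMagma (Fin (k + 1)), InDr z ∧ evalVar (Fin.cons x y) z = a })

/-- `u` is a subword of `w`. -/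
inductive IsSubword {A : Type*} : FreeMagma A → FreeMagma A → Prop
  | refl (w : FreeMagma A) : IsSubword w w
  | left {s u : FreeMagma A} (v : FreeMagma A) : IsSubword s u → IsSubword s (u * v)
  | right (u : FreeMagma A) {s v : FreeMagma A} : IsSubword s v → IsSubword s (u * v)

/-- `IsSprout w L`: `L` is a sprout sequence of the word `w` (with the convention that
words of length 1 have the empty sprout sequence). -/
inductive IsSprout {A : Type*} : FreeMagma A → List (FreeMagma A) → Prop
  | single (a : A) : IsSprout (FreeMagma.of a) []
  | cons_l {u v : FreeMagma A} {L : List (FreeMagma A)} :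
      wlen u ≤ wlen v → IsSprout v L → IsSprout (u * v) (u :: L)
  | cons_r {u v : FreeMagma A} {L : List (FreeMagma A)} :
      wlen v ≤ wlen u → IsSprout u L → IsSprout (u * v) (v :: L)

/-- A word is `k`-bounded if it has length 1 or admits an `l`-sprout sequence all of whose
terms are strictly less than `k`. -/
def KBounded {A : Type*} (k : ℕ) (w : FreeMagma A) : Prop :=
  ∃ L : List (FreeMagma A), IsSprout w L ∧ ∀ u ∈ L, wlen u < k

/-- A word `w` in `S` is irreducible if it does not lie in `L_m(S)` for any `m < l(w)`. -/
def Irred (F : Type*) {A : Type*} [Field F] [NonUnitalNonAssocRing A] [Module F A]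
    (S : Set A) (w : FreeMagma A) : Prop :=
  ∀ m : ℕ, m < wlen w → evalA w ∉ Lspan F S m

/-- The step function of a word: the least `t` such that `w` has a subword of
length `l(w) - 2t - 1`. -/
noncomputable def stepFn {A : Type*} (w : FreeMagma A) : ℕ :=
  sInf { t : ℕ | ∃ u : FreeMagma A, IsSubword u w ∧ wlen u + 2 * t + 1 = wlen w }

/-- `w` is a `p`-step word for the generating set `S`. -/
def IsPStepWord (F : Type*) {A : Type*} [Field F] [NonUnitalNonAssocRing A] [Module F A]
    (S : Set A) (w : FreeMagma A) (p : ℕ) : Prop :=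
  HasLeavesIn S w ∧ Irred F S w ∧ KBounded 3 w ∧ stepFn w = p ∧
    ∀ v : FreeMagma A, HasLeavesIn S v → Irred F S v → KBounded 3 v → wlen v = wlen w →
      p ≤ stepFn v

/-- `A` is `k`-round: `x · v = 0` for every product `v` of `k` elements. -/
def IsKRound (A : Type*) [NonUnitalNonAssocRing A] (k : ℕ) : Prop :=
  ∀ (x : A) (w : FreeMagma A), wlen w = k → x * evalA w = 0

/-- `A` is `k`-based. -/
def IsKBased (A : Type*) [NonUnitalNonAssocRing A] (k : ℕ) : Prop :=
  ∀ (x : A) (u v : FreeMagma A), wlen u + wlen v = k →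
    x * (evalA u * evalA v) = evalA u * (x * evalA v) ∧
      (evalA u * evalA v) * x = (evalA u * x) * evalA v

/-- The set `P(x,y,z)`. -/
def Pset {A : Type*} [Mul A] (x y z : A) : Set A :=
  {(x*z)*y, (z*x)*y, (y*z)*x, (z*y)*x, x*(z*y), x*(y*z), y*(x*z), y*(z*x),
    x*y, y*x, x*z, z*x, y*z, z*y, x, y, z}

/-- The set `Q_l(x,y,z)`. -/
def Qlset {A : Type*} [Mul A] (x y z : A) : Set A :=
  {x*(z*y), x*(y*z), y*(x*z), y*(z*x), x*y, y*x, x*z, z*x, y*z, z*y, x, y, z}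

/-- The set `Q_r(x,y,z)`. -/
def Qrset {A : Type*} [Mul A] (x y z : A) : Set A :=
  {(x*z)*y, (z*x)*y, (y*z)*x, (z*y)*x, x*y, y*x, x*z, z*x, y*z, z*y, x, y, z}

/-- `A` is a mixing algebra. -/
def IsMixingAlg (F A : Type*) [Field F] [NonUnitalNonAssocRing A] [Module F A] : Prop :=
  ∀ x y z : A, (x*y)*z ∈ Submodule.span F (Pset x y z) ∧
    z*(x*y) ∈ Submodule.span F (Pset x y z)

/-- `A` is a sliding algebra. -/
def IsSlidingAlg (F A : Type*) [Field F] [NonUnitalNonAssocRing A] [Module F A] : Prop :=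
  (∀ x y z : A, z*(x*y) ∈ Submodule.span F (Qrset x y z)) ∨
  (∀ x y z : A, (x*y)*z ∈ Submodule.span F (Qlset x y z))

/-- A bundled finite-dimensional `k`-round `F`-algebra together with a finite generating
set witnessing `l(A) > c · dim A + b`. -/
structure RoundWitness (F : Type) [Field F] (k : ℕ) (c bb : ℝ) where
  A : Type
  [ring : NonUnitalNonAssocRing A]
  [mod : Module F A]
  [smulComm : SMulCommClass F A A]
  [tower : IsScalarTower F A A]
  finite : FiniteDimensional F A
  round : IsKRound A k
  exceeds : ∃ S : Set A, S.Finite ∧ Generates F S ∧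
    c * (Module.finrank F A : ℝ) + bb < (lenS F S : ℝ)

/-- A bundled finite-dimensional `k`-based `F`-algebra together with a finite generating
set witnessing `l(A) > c · dim A + b`. -/
structure BasedWitness (F : Type) [Field F] (k : ℕ) (c bb : ℝ) where
  A : Type
  [ring : NonUnitalNonAssocRing A]
  [mod : Module F A]
  [smulComm : SMulCommClass F A A]
  [tower : IsScalarTower F A A]
  finite : FiniteDimensional F A
  based : IsKBased A k
  exceeds : ∃ S : Set A, S.Finite ∧ Generates F S ∧
    c * (Module.finrank F A : ℝ) + bb < (lenS F S : ℝ)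

/-!
In a `k`-round algebra `u * v = 0` whenever `v` is a word of length at least `k`, so words grow
only by right factors of length less than `k`. Hence `L_t(S) = L_{t+k-1}(S)` forces
`L_t(S) = A`, and the dimensions along `L_0 ⊆ L_{k-1} ⊆ L_{2(k-1)} ⊆ ⋯` increase strictly until
they reach `dim A`; thus `l(S) ≤ (k - 1) dim A`.

For sharpness let `K = k - 1` and take the algebra with basis `e_m`,
`m ∈ {1, …, K} ∪ {2K, …, nK}`, where `e_a e_1 = e_{a+1}` for `a < K`, `e_{iK} e_K = e_{(i+1)K}`,
and all other products of basis vectors vanish. It is graded by `m` and only `e_1`, `e_K` act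
nontrivially from the right, so it is `k`-round. The element `e_1` generates it, but `e_{nK}`
is reached only by words of length `nK`, while the dimension is `n + K - 1`.
-/

section Words

variable {α : Type*}

@[simp] theorem wlen_of (a : α) : wlen (FreeMagma.of a) = 1 := rfl

@[simp] theorem wlen_mul (u v : FreeMagma α) : wlen (u * v) = wlen u + wlen v := by
  simp [wlen, leafList]

theorem one_le_wlen (w : FreeMagma α) : 1 ≤ wlen w := by
  induction w with
  | ih1 a => simp
  | ih2 u v _ _ => simp only [wlen_mul]; omega

theorem hasLeavesIn_of {S : Set α} {a : α} : HasLeavesIn S (FreeMagma.of a) ↔ a ∈ S := by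
  simp [HasLeavesIn, leafList]

theorem hasLeavesIn_mul {S : Set α} {u v : FreeMagma α} :
    HasLeavesIn S (u * v) ↔ HasLeavesIn S u ∧ HasLeavesIn S v := by
  simp only [HasLeavesIn, leafList, List.mem_append]
  exact ⟨fun h => ⟨fun a ha => h a (.inl ha), fun a ha => h a (.inr ha)⟩,
    fun h a ha => ha.elim (h.1 a) (h.2 a)⟩

end Words

section Evaluation

variable {A : Type*} [Mul A]

@[simp] theorem evalA_of (a : A) : evalA (FreeMagma.of a) = a := rfl

@[simp] theorem evalA_mul (u v : FreeMagma A) : evalA (u * v) = evalA u * evalA v := rfl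

theorem evalA_induction {S : Set A} {P : ℕ → A → Prop} (hS : ∀ a ∈ S, P 1 a)
    (hmul : ∀ p q a b, P p a → P q b → P (p + q) (a * b)) {w : FreeMagma A}
    (hw : HasLeavesIn S w) : P (wlen w) (evalA w) := by
  induction w with
  | ih1 a => exact hS a (hasLeavesIn_of.mp hw)
  | ih2 u v ihu ihv =>
    obtain ⟨hu, hv⟩ := hasLeavesIn_mul.mp hw
    rw [wlen_mul, evalA_mul]
    exact hmul _ _ _ _ (ihu hu) (ihv hv)

/-- Subwords can be contracted to single letters, since the letters range over all of `A`. -/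
theorem exists_wlen_eq_evalA_eq (w : FreeMagma A) {k : ℕ} (hk : 1 ≤ k) (hkw : k ≤ wlen w) :
    ∃ w' : FreeMagma A, wlen w' = k ∧ evalA w' = evalA w := by
  induction w generalizing k with
  | ih1 a => exact ⟨.of a, by simp at hkw ⊢; omega, rfl⟩
  | ih2 u v ihu ihv =>
    rcases eq_or_lt_of_le hk with rfl | hk
    · exact ⟨.of (evalA (u * v)), rfl, rfl⟩
    simp only [wlen_mul] at hkw
    have := one_le_wlen u
    have := one_le_wlen v
    obtain ⟨u', hu', hu'v⟩ := ihu (k := min (wlen u) (k - 1)) (by omega) (min_le_left _ _)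
    obtain ⟨v', hv', hv'v⟩ := ihv (k := k - min (wlen u) (k - 1)) (by omega) (by omega)
    exact ⟨u' * v', by simp only [wlen_mul]; omega, by simp [hu'v, hv'v]⟩

def IsWordValue (S : Set A) (m : ℕ) (a : A) : Prop :=
  ∃ w : FreeMagma A, HasLeavesIn S w ∧ wlen w = m ∧ evalA w = a

theorem IsWordValue.of_mem {S : Set A} {a : A} (ha : a ∈ S) : IsWordValue S 1 a :=
  ⟨.of a, hasLeavesIn_of.mpr ha, rfl, rfl⟩

theorem IsWordValue.mul {S : Set A} {p q : ℕ} {a b : A} (ha : IsWordValue S p a)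
    (hb : IsWordValue S q b) : IsWordValue S (p + q) (a * b) := by
  obtain ⟨u, hu, rfl, rfl⟩ := ha
  obtain ⟨v, hv, rfl, rfl⟩ := hb
  exact ⟨u * v, hasLeavesIn_mul.mpr ⟨hu, hv⟩, wlen_mul u v, rfl⟩

end Evaluation

theorem IsKRound.mul_evalA_eq_zero {A : Type*} [NonUnitalNonAssocRing A] {k : ℕ}
    (hr : IsKRound A k) (hk : 1 ≤ k) (x : A) {w : FreeMagma A} (hw : k ≤ wlen w) :
    x * evalA w = 0 := by
  obtain ⟨w', hw', hw'w⟩ := exists_wlen_eq_evalA_eq w hk hw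
  rw [← hw'w]
  exact hr x w' hw'

section Lspan

variable {F A : Type*} [Field F] [NonUnitalNonAssocRing A] [Module F A] {S : Set A}

theorem Lspan_mono {i j : ℕ} (h : i ≤ j) : Lspan F S i ≤ Lspan F S j :=
  Submodule.span_mono fun _ ⟨w, hw, hwi, hwa⟩ => ⟨w, hw, hwi.trans h, hwa⟩

theorem evalA_mem_Lspan {w : FreeMagma A} (hw : HasLeavesIn S w) {i : ℕ} (hi : wlen w ≤ i) :
    evalA w ∈ Lspan F S i :=
  Submodule.subset_span ⟨w, hw, hi, rfl⟩

theorem IsWordValue.mem_Lspan {m i : ℕ} {a : A} (ha : IsWordValue S m a) (hm : m ≤ i) :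
    a ∈ Lspan F S i := by
  obtain ⟨w, hw, rfl, rfl⟩ := ha
  exact evalA_mem_Lspan hw hm

theorem mul_evalA_mem_Lspan [IsScalarTower F A A] {a : A} {i : ℕ} (ha : a ∈ Lspan F S i)
    {v : FreeMagma A} (hv : HasLeavesIn S v) : a * evalA v ∈ Lspan F S (i + wlen v) := by
  suffices Lspan F S i ≤ (Lspan F S (i + wlen v)).comap (LinearMap.mulRight F (evalA v)) from
    this ha
  rw [Lspan, Submodule.span_le]
  rintro _ ⟨w, hw, hwi, rfl⟩
  exact evalA_mem_Lspan (w := w * v) (hasLeavesIn_mul.mpr ⟨hw, hv⟩)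
    (by simp only [wlen_mul]; omega)

theorem generates_of_Lspan_eq_top {N : ℕ} (h : Lspan F S N = ⊤) : Generates F S :=
  eq_top_iff.mpr <| h ▸ Submodule.span_mono fun _ ⟨w, hw, _, hwa⟩ => ⟨w, hw, hwa⟩

theorem Lspan_eq_top_of_forall_evalA_mem (hg : Generates F S) {t : ℕ}
    (h : ∀ w, HasLeavesIn S w → evalA w ∈ Lspan F S t) : Lspan F S t = ⊤ := by
  rw [eq_top_iff, ← hg, Submodule.span_le]
  rintro _ ⟨w, hw, rfl⟩
  exact h w hw

theorem lenS_le_of_Lspan_eq_top {N : ℕ} (h : Lspan F S N = ⊤) : lenS F S ≤ N :=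
  Nat.sInf_le h

theorem Lspan_lenS_eq_top {N : ℕ} (h : Lspan F S N = ⊤) : Lspan F S (lenS F S) = ⊤ :=
  Nat.sInf_mem (s := {k | Lspan F S k = ⊤}) ⟨N, h⟩

variable [IsScalarTower F A A] {k : ℕ}

theorem IsKRound.evalA_mem_Lspan_of_le (hr : IsKRound A k) (hk : 2 ≤ k) {t : ℕ}
    (hst : Lspan F S (t + (k - 1)) ≤ Lspan F S t) {w : FreeMagma A} (hw : HasLeavesIn S w) :
    evalA w ∈ Lspan F S t := by
  induction w with
  | ih1 a => exact hst (evalA_mem_Lspan hw (by simp; omega))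
  | ih2 u v ihu _ =>
    obtain ⟨hu, hv⟩ := hasLeavesIn_mul.mp hw
    rw [evalA_mul]
    by_cases hvk : k ≤ wlen v
    · rw [hr.mul_evalA_eq_zero (by omega) _ hvk]
      exact zero_mem _
    · exact hst (Lspan_mono (by omega) (mul_evalA_mem_Lspan (ihu hu) hv))

theorem IsKRound.Lspan_eq_top_or_le_finrank [FiniteDimensional F A] (hr : IsKRound A k)
    (hk : 2 ≤ k) (hg : Generates F S) (j : ℕ) :
    Lspan F S (j * (k - 1)) = ⊤ ∨ j ≤ Module.finrank F (Lspan F S (j * (k - 1))) := by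
  induction j with
  | zero => exact .inr (Nat.zero_le _)
  | succ j ih =>
    have hmono : Lspan F S (j * (k - 1)) ≤ Lspan F S ((j + 1) * (k - 1)) :=
      Lspan_mono (Nat.mul_le_mul_right _ j.le_succ)
    by_cases htop : Lspan F S (j * (k - 1)) = ⊤
    · exact .inl (eq_top_iff.mpr (htop ▸ hmono))
    have hj := ih.resolve_left htop
    have hlt : Lspan F S (j * (k - 1)) < Lspan F S ((j + 1) * (k - 1)) := by
      refine hmono.lt_of_ne fun heq => htop ?_
      refine Lspan_eq_top_of_forall_evalA_mem hg fun w hw => hr.evalA_mem_Lspan_of_le hk ?_ hw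
      rw [heq, Nat.succ_mul]
    exact .inr (hj.trans_lt (Submodule.finrank_lt_finrank_of_lt hlt))

theorem IsKRound.lenS_le [FiniteDimensional F A] (hr : IsKRound A k) (hk : 2 ≤ k)
    (hg : Generates F S) : lenS F S ≤ (k - 1) * Module.finrank F A := by
  rw [mul_comm]
  refine lenS_le_of_Lspan_eq_top ?_
  rcases hr.Lspan_eq_top_or_le_finrank hk hg (Module.finrank F A) with htop | hle
  · exact htop
  · exact Submodule.eq_top_of_finrank_eq (le_antisymm (Submodule.finrank_le _) hle)

end Lspan

def degSet (K n : ℕ) : Finset ℕ := Finset.Icc 1 K ∪ (Finset.Icc 2 n).image (· * K)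

abbrev Deg (K n : ℕ) := {m : ℕ // m ∈ degSet K n}

def MulRule (K a b : ℕ) : Prop := (b = 1 ∧ a + 1 ≤ K) ∨ (b = K ∧ K ∣ a)

def RoundAlg (F : Type) (K n : ℕ) : Type := Deg K n → F

theorem MulRule.le {K a b : ℕ} (h : MulRule K a b) : b ≤ K := by
  rcases h with ⟨rfl, h⟩ | ⟨rfl, -⟩ <;> omega

theorem mem_degSet {K n m : ℕ} :
    m ∈ degSet K n ↔ (1 ≤ m ∧ m ≤ K) ∨ ∃ i, 2 ≤ i ∧ i ≤ n ∧ i * K = m := by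
  simp [degSet, and_assoc]

theorem card_degSet_le (K n : ℕ) : (degSet K n).card ≤ n + K := by
  calc (degSet K n).card ≤ (Finset.Icc 1 K).card + ((Finset.Icc 2 n).image (· * K)).card :=
        Finset.card_union_le _ _
    _ ≤ K + (n + 1 - 2) := add_le_add (by simp) (Finset.card_image_le.trans (by simp))
    _ ≤ n + K := by omega

namespace RoundAlg

variable {F : Type} [Field F] {K n : ℕ}

open scoped Pointwise

instance : AddCommGroup (RoundAlg F K n) := inferInstanceAs (AddCommGroup (Deg K n → F))
instance : Module F (RoundAlg F K n) := inferInstanceAs (Module F (Deg K n → F))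
instance : FiniteDimensional F (RoundAlg F K n) :=
  inferInstanceAs (FiniteDimensional F (Deg K n → F))

variable (F) in
noncomputable def basis : Module.Basis (Deg K n) F (RoundAlg F K n) := Pi.basisFun F (Deg K n)

open Classical in
noncomputable def basisMul (a b : Deg K n) : RoundAlg F K n :=
  if h : MulRule K a b ∧ a.1 + b.1 ∈ degSet K n then basis F ⟨a.1 + b.1, h.2⟩ else 0

noncomputable def mulₗ : RoundAlg F K n →ₗ[F] RoundAlg F K n →ₗ[F] RoundAlg F K n :=
  (basis F).constr F fun a => (basis F).constr F (basisMul a)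

noncomputable instance : Mul (RoundAlg F K n) := ⟨fun u v => mulₗ u v⟩

theorem mul_def (u v : RoundAlg F K n) : u * v = mulₗ u v := rfl

noncomputable instance : NonUnitalNonAssocRing (RoundAlg F K n) where
  left_distrib u v w := map_add (mulₗ u) v w
  right_distrib u v w := LinearMap.map_add₂ mulₗ u v w
  zero_mul u := LinearMap.map_zero₂ mulₗ u
  mul_zero u := map_zero (mulₗ u)

instance : SMulCommClass F (RoundAlg F K n) (RoundAlg F K n) :=
  ⟨fun c u v => (map_smul (mulₗ u) c v).symm⟩

instance : IsScalarTower F (RoundAlg F K n) (RoundAlg F K n) :=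
  ⟨fun c u v => LinearMap.map_smul₂ mulₗ c u v⟩

theorem basis_mul_basis (a b : Deg K n) : basis F a * basis F b = basisMul a b := by
  simp [mul_def, mulₗ]

theorem basis_mul_basis_of_mulRule {a b c : Deg K n} (h : MulRule K a b)
    (hc : a.1 + b.1 = c.1) : basis F a * basis F b = basis F c := by
  rw [basis_mul_basis, basisMul, dif_pos ⟨h, hc ▸ c.2⟩]
  exact congrArg _ (Subtype.ext hc)

variable (F) in
noncomputable def spanDeg (s : Set ℕ) : Submodule F (RoundAlg F K n) :=
  Submodule.span F (basis F '' {m | m.1 ∈ s})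

theorem spanDeg_mono {s t : Set ℕ} (h : s ⊆ t) :
    spanDeg F (K := K) (n := n) s ≤ spanDeg F t :=
  Submodule.span_mono (Set.image_mono fun _ hm => h hm)

theorem mul_mem_spanDeg {s t : Set ℕ} {u v : RoundAlg F K n} (hu : u ∈ spanDeg F s)
    (hv : v ∈ spanDeg F t) : u * v ∈ spanDeg F (s + t) := by
  have := Submodule.apply_mem_map₂ mulₗ hu hv
  rw [spanDeg, spanDeg, Submodule.map₂_span_span] at this
  refine Submodule.span_le.mpr ?_ this
  rintro _ ⟨_, ⟨a, ha, rfl⟩, _, ⟨b, hb, rfl⟩, rfl⟩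
  change basis F a * basis F b ∈ _
  rw [basis_mul_basis, basisMul]
  split_ifs with h
  · exact Submodule.subset_span ⟨⟨_, h.2⟩, Set.add_mem_add ha hb, rfl⟩
  · exact zero_mem _

theorem spanDeg_Ici_one (hK : 1 ≤ K) : spanDeg F (K := K) (n := n) (Set.Ici 1) = ⊤ := by
  have : {m : Deg K n | m.1 ∈ Set.Ici 1} = Set.univ := by
    ext m
    simp only [Set.mem_Ici, Set.mem_ofPred_eq, Set.mem_univ, iff_true]
    rcases mem_degSet.mp m.2 with h | ⟨i, hi, -, h⟩
    · exact h.1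
    · rw [← h]; nlinarith
  rw [spanDeg, this, Set.image_univ, (basis F).span_eq]

theorem mul_eq_zero_of_mem_spanDeg (y : RoundAlg F K n) {v : RoundAlg F K n}
    (hv : v ∈ spanDeg F (Set.Ici (K + 1))) : y * v = 0 := by
  suffices spanDeg F (Set.Ici (K + 1)) ≤ LinearMap.ker (mulₗ (F := F) (K := K) (n := n)).flip
    from LinearMap.congr_fun (this hv) y
  refine Submodule.span_le.mpr ?_
  rintro _ ⟨b, hb, rfl⟩
  refine (basis F).ext fun a => ?_
  change basis F a * basis F b = 0
  rw [basis_mul_basis, basisMul, dif_neg fun h => by have := h.1.le; simp at hb; omega]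

theorem isKRound (hK : 1 ≤ K) : IsKRound (RoundAlg F K n) (K + 1) := by
  intro y w hw
  refine mul_eq_zero_of_mem_spanDeg y (hw ▸ ?_)
  refine evalA_induction (S := Set.univ) (P := fun p a => a ∈ spanDeg F (Set.Ici p))
    (fun _ _ => (spanDeg_Ici_one (F := F) (n := n) hK) ▸ Submodule.mem_top)
    (fun p q _ _ ha hb => ?_) (fun _ _ => Set.mem_univ _)
  exact spanDeg_mono (Set.Ici_add_Ici_subset p q) (mul_mem_spanDeg ha hb)

theorem one_mem_degSet (hK : 1 ≤ K) : 1 ∈ degSet K n :=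
  mem_degSet.mpr (.inl ⟨le_rfl, hK⟩)

theorem mul_mem_degSet (hK : 1 ≤ K) {i : ℕ} (hi : 1 ≤ i) (hin : i ≤ n) :
    i * K ∈ degSet K n := by
  rcases eq_or_lt_of_le hi with rfl | hi
  · exact mem_degSet.mpr (.inl ⟨by simpa, by simp⟩)
  · exact mem_degSet.mpr (.inr ⟨i, hi, hin, rfl⟩)

theorem le_of_mem_degSet (hn : 1 ≤ n) {m : ℕ} (hm : m ∈ degSet K n) : m ≤ n * K := by
  rcases mem_degSet.mp hm with ⟨-, hmK⟩ | ⟨i, -, hin, rfl⟩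
  · exact hmK.trans (Nat.le_mul_of_pos_left K hn)
  · exact Nat.mul_le_mul_right K hin

variable (F n) in
noncomputable def gen (hK : 1 ≤ K) : RoundAlg F K n := basis F ⟨1, one_mem_degSet hK⟩

theorem isWordValue_basis (hK : 1 ≤ K) (m : Deg K n) :
    IsWordValue {gen F n hK} m.1 (basis F m) := by
  obtain ⟨m, hm⟩ := m
  have hgen : IsWordValue {gen F n hK} 1 (basis F ⟨1, one_mem_degSet hK⟩) := .of_mem rfl
  induction m using Nat.strong_induction_on with
  | _ m ih =>
    rcases mem_degSet.mp hm with ⟨h1, hmK⟩ | ⟨i, hi, hin, rfl⟩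
    · rcases eq_or_lt_of_le h1 with rfl | h1
      · exact hgen
      obtain ⟨j, rfl⟩ : ∃ j, m = j + 1 := ⟨m - 1, by omega⟩
      have hj : j ∈ degSet K n := mem_degSet.mpr (.inl ⟨by omega, by omega⟩)
      have := (ih j (by omega) hj).mul hgen
      rwa [basis_mul_basis_of_mulRule (c := ⟨j + 1, hm⟩) (.inl ⟨rfl, hmK⟩) rfl] at this
    · obtain ⟨i, rfl⟩ : ∃ j, i = j + 1 := ⟨i - 1, by omega⟩
      have hiK : i * K ∈ degSet K n := mul_mem_degSet hK (by omega) (by omega)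
      have hK' : K ∈ degSet K n := mem_degSet.mpr (.inl ⟨hK, le_rfl⟩)
      have := (ih (i * K) (by nlinarith) hiK).mul (ih K (by nlinarith) hK')
      rwa [basis_mul_basis_of_mulRule (c := ⟨(i + 1) * K, hm⟩) (.inr ⟨rfl, dvd_mul_left K i⟩)
        (add_one_mul i K).symm, ← add_one_mul] at this

theorem Lspan_gen_le_spanDeg (hK : 1 ≤ K) (m : ℕ) :
    Lspan F {gen F n hK} m ≤ spanDeg F (Set.Iic m) := by
  refine Submodule.span_le.mpr ?_
  rintro _ ⟨w, hw, hwm, rfl⟩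
  have hw : evalA w ∈ spanDeg F {wlen w} := by
    refine evalA_induction (P := fun p (a : RoundAlg F K n) => a ∈ spanDeg F {p})
      (fun a ha => ?_) (fun p q _ _ ha hb => ?_) hw
    · rw [Set.mem_singleton_iff.mp ha]
      exact Submodule.subset_span ⟨_, rfl, rfl⟩
    · exact Set.singleton_add_singleton (a := p) (b := q) ▸ mul_mem_spanDeg ha hb
  exact spanDeg_mono (Set.singleton_subset_iff.mpr (Set.mem_Iic.mpr hwm)) hw

theorem Lspan_gen_eq_top (hK : 1 ≤ K) (hn : 1 ≤ n) : Lspan F {gen F n hK} (n * K) = ⊤ := by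
  rw [eq_top_iff, ← (basis F).span_eq, Submodule.span_le]
  rintro _ ⟨m, rfl⟩
  exact (isWordValue_basis hK m).mem_Lspan (le_of_mem_degSet hn m.2)

theorem le_lenS_gen (hK : 1 ≤ K) (hn : 1 ≤ n) : n * K ≤ lenS F {gen F n hK} := by
  by_contra! hlt
  have htop := Lspan_lenS_eq_top (Lspan_gen_eq_top (F := F) hK hn)
  have hmem : n * K ∈ degSet K n := mul_mem_degSet hK hn le_rfl
  have := Lspan_gen_le_spanDeg hK _ (htop ▸ Submodule.mem_top (x := basis F ⟨n * K, hmem⟩))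
  exact (basis F).linearIndependent.notMem_span_image (by simpa using hlt) this

theorem finrank_le : Module.finrank F (RoundAlg F K n) ≤ n + K := by
  change Module.finrank F (Deg K n → F) ≤ _
  rw [Module.finrank_fintype_fun_eq_card, Fintype.card_coe]
  exact card_degSet_le K n

end RoundAlg

theorem exists_forall_mul_add_lt {c : ℝ} {K : ℕ} (hK : 1 ≤ K) (hc : c < K) (b : ℝ) :
    ∃ n : ℕ, 1 ≤ n ∧ ∀ d : ℕ, d ≤ n + K → c * d + b < n * K := by
  set c₀ := max c 0
  have hc₀ : c₀ < K := max_lt hc (by simp; omega)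
  obtain ⟨n, hn⟩ := exists_nat_gt ((c₀ * K + b) / (K - c₀))
  rw [div_lt_iff₀ (by linarith)] at hn
  refine ⟨n + 1, by omega, fun d hd => ?_⟩
  have hd : (d : ℝ) ≤ n + 1 + K := by exact_mod_cast hd
  calc c * d + b ≤ c₀ * d + b := by gcongr; exact le_max_left c 0
    _ ≤ c₀ * (n + 1 + K) + b := by gcongr
    _ < ((n + 1 : ℕ) : ℝ) * K := by push_cast; nlinarith

theorem exists_roundWitness (F : Type) [Field F] {k : ℕ} (hk : 2 ≤ k) {c : ℝ} (hc : c < k - 1)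
    (b : ℝ) : Nonempty (RoundWitness F k c b) := by
  obtain ⟨K, rfl⟩ : ∃ K, k = K + 1 := ⟨k - 1, by omega⟩
  have hK : 1 ≤ K := by omega
  obtain ⟨n, hn, hlt⟩ := exists_forall_mul_add_lt hK (by simpa using hc) b
  refine ⟨⟨RoundAlg F K n, inferInstance, RoundAlg.isKRound hK, {RoundAlg.gen F n hK},
    Set.finite_singleton _, generates_of_Lspan_eq_top (RoundAlg.Lspan_gen_eq_top hK hn), ?_⟩⟩
  calc c * (Module.finrank F (RoundAlg F K n) : ℝ) + b < n * K := hlt _ RoundAlg.finrank_le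
    _ ≤ lenS F {RoundAlg.gen F n hK} := by exact_mod_cast RoundAlg.le_lenS_gen hK hn

theorem stmt9 (F : Type) [Field F] (k : ℕ) (hk : 2 ≤ k) :
    (∀ c bb : ℝ, c < (k : ℝ) - 1 → Nonempty (RoundWitness F k c bb)) ∧
    (∀ (A : Type) [NonUnitalNonAssocRing A] [Module F A]
        [SMulCommClass F A A] [IsScalarTower F A A],
      FiniteDimensional F A → IsKRound A k →
        ∀ S : Set A, S.Finite → Generates F S →
          lenS F S ≤ (k - 1) * Module.finrank F A) :=
  ⟨fun _ bb hc => exists_roundWitness F hk hc bb,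
    fun _ _ _ _ _ _ hr _ _ hg => hr.lenS_le hk hg⟩

end P
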